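/- arXiv:2304.04645 — 2 statements merged into one kernel-verified Lean document; each statement's English description precedes it below -/
import Mathlib

section
/- Let X be a topological space with H²(X;ℚ) = 0 and suppose the even-degree rational cohomology ring H^{even}(X × S¹;ℚ) is generated as a ring by H⁰(X × S¹;ℚ) ⊕ H²(X × S¹;ℚ). Then H^k(X;ℚ) = 0 for all k ≥ 2. -/
/-!
Since `H²(X) = 0`, every degree-2 class of `X × S¹` is `π₁ y · t` with `deg y = 1`, and
`(π₁ y · t)(π₁ y' · t) = -(π₁ y · π₁ y') · t² = 0`. Hence the subalgebra generated by degrees 0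
and 2 is just `ℬ 0 ⊕ ℬ 2`, so by the generation hypothesis every even degree `≥ 4` of `B`
vanishes. For `a ∈ 𝒜 k` with `k ≥ 3`, either `π₁ a` (k even) or `π₁ a · t` (k odd) lies in such
a degree, and uniqueness of the Künneth decomposition forces `a = 0`.
-/

section GradedSquareZero

variable {ι R B : Type*} [DecidableEq ι] [CommSemiring R]

theorem DirectSum.Decomposition.eq_zero_of_mem_sup_of_ne [AddCommMonoid B] [Module R B]
    (ℬ : ι → Submodule R B) [DirectSum.Decomposition ℬ] {j k l : ι} {b : B} (hb : b ∈ ℬ j)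
    (hbkl : b ∈ ℬ k ⊔ ℬ l) (hk : j ≠ k) (hl : j ≠ l) : b = 0 := by
  have hdisj : Disjoint (ℬ j) (⨆ m ∈ ({k, l} : Set ι), ℬ m) :=
    (DirectSum.Decomposition.isInternal ℬ).submodule_iSupIndep.disjoint_biSup (by simp [hk, hl])
  rw [iSup_pair] at hdisj
  exact (Submodule.disjoint_def.1 hdisj) b hb hbkl

variable [AddMonoid ι] [Semiring B] [Algebra R B] (ℬ : ι → Submodule R B) [GradedAlgebra ℬ]
  {i : ι}

theorem GradedAlgebra.mul_mem_zero_sup_of_sq_eq_zero (hsq : ∀ u ∈ ℬ i, ∀ v ∈ ℬ i, u * v = 0)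
    {x y : B} (hx : x ∈ ℬ 0 ⊔ ℬ i) (hy : y ∈ ℬ 0 ⊔ ℬ i) : x * y ∈ ℬ 0 ⊔ ℬ i := by
  obtain ⟨x₀, hx₀, xᵢ, hxᵢ, rfl⟩ := Submodule.mem_sup.1 hx
  obtain ⟨y₀, hy₀, yᵢ, hyᵢ, rfl⟩ := Submodule.mem_sup.1 hy
  have h₀₀ : x₀ * y₀ ∈ ℬ 0 := by simpa using SetLike.mul_mem_graded hx₀ hy₀
  have h₀ᵢ : x₀ * yᵢ ∈ ℬ i := by simpa using SetLike.mul_mem_graded hx₀ hyᵢ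
  have hᵢ₀ : xᵢ * y₀ ∈ ℬ i := by simpa using SetLike.mul_mem_graded hxᵢ hy₀
  rw [add_mul, mul_add, mul_add, hsq xᵢ hxᵢ yᵢ hyᵢ, add_zero]
  exact add_mem (add_mem (Submodule.mem_sup_left h₀₀) (Submodule.mem_sup_right h₀ᵢ))
    (Submodule.mem_sup_right hᵢ₀)

theorem GradedAlgebra.mem_zero_sup_of_mem_adjoin (hsq : ∀ u ∈ ℬ i, ∀ v ∈ ℬ i, u * v = 0)
    {b : B} (hb : b ∈ Algebra.adjoin R ((ℬ 0 : Set B) ∪ ℬ i)) : b ∈ ℬ 0 ⊔ ℬ i := by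
  induction hb using Algebra.adjoin_induction with
  | mem x hx => exact hx.elim Submodule.mem_sup_left Submodule.mem_sup_right
  | algebraMap r => exact Submodule.mem_sup_left (SetLike.algebraMap_mem_graded ℬ r)
  | add x y _ _ hx hy => exact add_mem hx hy
  | mul x y _ _ hx hy => exact mul_mem_zero_sup_of_sq_eq_zero ℬ hsq hx hy

theorem GradedAlgebra.eq_zero_of_mem_adjoin (hsq : ∀ u ∈ ℬ i, ∀ v ∈ ℬ i, u * v = 0)
    {j : ι} {b : B} (hb : b ∈ ℬ j) (hb' : b ∈ Algebra.adjoin R ((ℬ 0 : Set B) ∪ ℬ i))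
    (h₀ : j ≠ 0) (hᵢ : j ≠ i) : b = 0 :=
  DirectSum.Decomposition.eq_zero_of_mem_sup_of_ne ℬ hb (mem_zero_sup_of_mem_adjoin ℬ hsq hb') h₀ hᵢ

end GradedSquareZero

theorem stmt9_general {A B : Type*} [Ring A] [Algebra ℚ A] [Ring B] [Algebra ℚ B]
    (𝒜 : ℕ → Submodule ℚ A) [GradedAlgebra 𝒜]
    (ℬ : ℕ → Submodule ℚ B) [GradedAlgebra ℬ]
    (π₁ : A →ₐ[ℚ] B)
    (hπdeg : ∀ n, ∀ a ∈ 𝒜 n, π₁ a ∈ ℬ n)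
    (t : B) (ht : t ∈ ℬ 1) (ht2 : t * t = 0)
    (hcomm : ∀ n, ∀ a ∈ 𝒜 n, t * π₁ a = ((-1 : ℚ) ^ n) • (π₁ a * t))
    (hKun : ∀ n : ℕ, ∀ b ∈ ℬ (n + 1), ∃ x ∈ 𝒜 (n + 1), ∃ y ∈ 𝒜 n, b = π₁ x + π₁ y * t)
    (huniq : ∀ n : ℕ, ∀ x ∈ 𝒜 (n + 1), ∀ y ∈ 𝒜 n, π₁ x + π₁ y * t = 0 → x = 0 ∧ y = 0)
    (h2 : 𝒜 2 = ⊥)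
    (hgen : ∀ k : ℕ, (ℬ (2 * k) : Set B) ⊆
      (Algebra.adjoin ℚ ((ℬ 0 : Set B) ∪ (ℬ 2 : Set B)) : Subalgebra ℚ B)) :
    ∀ k ≥ 2, 𝒜 k = ⊥ := by
  have hB₂ : ∀ u ∈ ℬ 2, ∃ y ∈ 𝒜 1, u = π₁ y * t := fun u hu => by
    obtain ⟨x, hx, y, hy, rfl⟩ := hKun 1 u hu
    rw [h2, Submodule.mem_bot] at hx
    exact ⟨y, hy, by rw [hx, map_zero, zero_add]⟩
  have hsq : ∀ u ∈ ℬ 2, ∀ v ∈ ℬ 2, u * v = 0 := fun u hu v hv => by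
    obtain ⟨y, hy, rfl⟩ := hB₂ u hu
    obtain ⟨y', hy', rfl⟩ := hB₂ v hv
    rw [mul_assoc, ← mul_assoc t, hcomm 1 y' hy', smul_mul_assoc, mul_assoc, ht2]
    simp
  have hvanish : ∀ m ≥ 4, Even m → ∀ b ∈ ℬ m, b = 0 := by
    rintro m hm ⟨j, rfl⟩ b hb
    rw [← two_mul] at hb
    exact GradedAlgebra.eq_zero_of_mem_adjoin ℬ hsq hb (hgen j hb) (by omega) (by omega)
  intro k hk
  obtain rfl | hk := hk.eq_or_lt
  · exact h2
  obtain ⟨n, rfl⟩ : ∃ n, k = n + 1 := ⟨k - 1, by omega⟩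
  refine (Submodule.eq_bot_iff _).2 fun a ha => ?_
  have hπa := hπdeg _ a ha
  rcases Nat.even_or_odd (n + 1) with heven | hodd
  · refine (huniq n a ha 0 (zero_mem _) ?_).1
    rw [map_zero, zero_mul, add_zero]
    exact hvanish _ (by have := Nat.even_iff.1 heven; omega) heven _ hπa
  · refine (huniq (n + 1) 0 (zero_mem _) a ha ?_).2
    rw [map_zero, zero_add]
    exact hvanish (n + 1 + 1) (by omega) hodd.add_one _ (SetLike.mul_mem_graded hπa ht)

/-- Let `A = H*(X;ℚ)` and `B = H*(X×S¹;ℚ)` be graded `ℚ`-algebras related by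
the Künneth isomorphism: `π₁ : A → B` degree-preserving injective, `t ∈ B` of degree 1 the
pullback of the fundamental class of `S¹` with `t² = 0` and graded commutation
`t·π₁(a) = (−1)^n π₁(a)·t` for `a` of degree `n`, such that every class of `B` in degree `n`
is uniquely `π₁(x) + π₁(y)·t` with `deg x = n`, `deg y = n−1`.  If `H²(X;ℚ) = 0` and the even
part of `B` is generated as a ring by its degree-0 and degree-2 parts, then `H^k(X;ℚ) = 0`
for all `k ≥ 2`. -/
theorem stmt9 {A B : Type*} [Ring A] [Algebra ℚ A] [Ring B] [Algebra ℚ B]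
    (𝒜 : ℕ → Submodule ℚ A) [GradedAlgebra 𝒜]
    (ℬ : ℕ → Submodule ℚ B) [GradedAlgebra ℬ]
    (π₁ : A →ₐ[ℚ] B) (hπinj : Function.Injective π₁)
    (hπdeg : ∀ n, ∀ a ∈ 𝒜 n, π₁ a ∈ ℬ n)
    (t : B) (ht : t ∈ ℬ 1) (ht2 : t * t = 0)
    (hcomm : ∀ n, ∀ a ∈ 𝒜 n, t * π₁ a = ((-1 : ℚ) ^ n) • (π₁ a * t))
    (hKun0 : ∀ b ∈ ℬ 0, ∃ x ∈ 𝒜 0, b = π₁ x)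
    (hKun : ∀ n : ℕ, ∀ b ∈ ℬ (n + 1), ∃ x ∈ 𝒜 (n + 1), ∃ y ∈ 𝒜 n, b = π₁ x + π₁ y * t)
    (huniq : ∀ n : ℕ, ∀ x ∈ 𝒜 (n + 1), ∀ y ∈ 𝒜 n, π₁ x + π₁ y * t = 0 → x = 0 ∧ y = 0)
    (h2 : 𝒜 2 = ⊥)
    (hgen : ∀ k : ℕ, (ℬ (2 * k) : Set B) ⊆
      (Algebra.adjoin ℚ ((ℬ 0 : Set B) ∪ (ℬ 2 : Set B)) : Subalgebra ℚ B)) :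
    ∀ k ≥ 2, 𝒜 k = ⊥ :=
  stmt9_general 𝒜 ℬ π₁ hπdeg t ht ht2 hcomm hKun huniq h2 hgen
end

section
/- Let F be a finite subset of Γ = π₁(M,p) for a compact connected Riemannian manifold M, with fixed piecewise smooth representing loops γ_s. Suppose for all s,t ∈ F we are given homotopies from γ_t * γ_s to γ_{st} of area at most C. Then for any hermitian vector bundle E with unitary connection ∇ and parallel transport P, the map ρ(s) = P_{γ_s} satisfies ‖ρ(st) − ρ(s)ρ(t)‖ ≤ C ‖R^∇‖ for all s, t ∈ F. -/
theorem norm_sub_mul_le_of_homotopic_trans {A M : Type*} [NormedRing A] [TopologicalSpace M]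
    {p : M} (P : Path p p → A) (Pmul : ∀ f g : Path p p, P (f.trans g) = P g * P f)
    (RR : ℝ) (Ar : Path p p → Path p p → ℝ)
    (hBK : ∀ f₀ f₁ : Path p p, Path.Homotopic f₀ f₁ → ‖P f₀ - P f₁‖ ≤ RR * Ar f₀ f₁)
    {f g h : Path p p} (hom : Path.Homotopic (f.trans g) h) :
    ‖P h - P g * P f‖ ≤ RR * Ar (f.trans g) h := by
  rw [norm_sub_rev, ← Pmul]
  exact hBK _ _ hom

theorem stmt13_general {Γ A M : Type*} [Group Γ] [NormedRing A] [TopologicalSpace M] (p : M)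
    (F : Finset Γ) (γ : Γ → Path p p)
    (P : Path p p → A)
    (Pmul : ∀ f g : Path p p, P (f.trans g) = P g * P f)
    (RR C : ℝ) (hRR : 0 ≤ RR)
    (Ar : Path p p → Path p p → ℝ)
    (hBK : ∀ f₀ f₁ : Path p p, Path.Homotopic f₀ f₁ → ‖P f₀ - P f₁‖ ≤ RR * Ar f₀ f₁)
    (harea : ∀ s ∈ F, ∀ t ∈ F,
      Path.Homotopic ((γ t).trans (γ s)) (γ (s * t)) ∧
      Ar ((γ t).trans (γ s)) (γ (s * t)) ≤ C) :
    ∀ s ∈ F, ∀ t ∈ F, ‖P (γ (s * t)) - P (γ s) * P (γ t)‖ ≤ C * RR := by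
  intro s hs t ht
  obtain ⟨hom, hArea⟩ := harea s hs t ht
  calc ‖P (γ (s * t)) - P (γ s) * P (γ t)‖
      ≤ RR * Ar ((γ t).trans (γ s)) (γ (s * t)) :=
        norm_sub_mul_le_of_homotopic_trans P Pmul RR Ar hBK hom
    _ ≤ RR * C := mul_le_mul_of_nonneg_left hArea hRR
    _ = C * RR := mul_comm _ _

/-- Let `F` be a finite subset of `Γ = π₁(M,p)` with fixed representing
loops `γ_s`, and suppose every pair `s,t ∈ F` admits a homotopy (rel endpoints) from
`γ_t * γ_s` to `γ_{st}` of area at most `C`.  For parallel transport `P` of a unitary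
connection `∇` with curvature norm `RR = ‖R^∇‖` (satisfying the Buser–Karcher estimate
`‖P_{f₀} − P_{f₁}‖ ≤ ‖R^∇‖ · area` and `P_{f.trans g} = P_g ∘ P_f`), the map
`ρ(s) = P_{γ_s}` satisfies `‖ρ(st) − ρ(s)ρ(t)‖ ≤ C‖R^∇‖` for all `s,t ∈ F`. -/
theorem stmt13 {Γ A M : Type*} [Group Γ] [NormedRing A] [TopologicalSpace M] (p : M)
    (F : Finset Γ) (γ : Γ → Path p p)
    (P : Path p p → A)
    (Pmul : ∀ f g : Path p p, P (f.trans g) = P g * P f)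
    (RR C : ℝ) (hRR : 0 ≤ RR) (hC : 0 ≤ C)
    (Ar : Path p p → Path p p → ℝ)
    (hBK : ∀ f₀ f₁ : Path p p, Path.Homotopic f₀ f₁ → ‖P f₀ - P f₁‖ ≤ RR * Ar f₀ f₁)
    (harea : ∀ s ∈ F, ∀ t ∈ F,
      Path.Homotopic ((γ t).trans (γ s)) (γ (s * t)) ∧
      Ar ((γ t).trans (γ s)) (γ (s * t)) ≤ C) :
    ∀ s ∈ F, ∀ t ∈ F, ‖P (γ (s * t)) - P (γ s) * P (γ t)‖ ≤ C * RR :=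
  stmt13_general p F γ P Pmul RR C hRR Ar hBK harea
end
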